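/- arXiv:2009.09755 — 3 statements merged into one kernel-verified Lean document; each statement's English description precedes it below -/
import Mathlib

section
/- (Smooth Hadamard-type lemma with vanishing to order k.) Let n ∈ ℕ, let s ≤ n, let k ∈ ℕ, let U be an open neighbourhood of 0 in Fin n → ℝ, and let S_s = {x : Fin n → ℝ | x i = 0 for every i with (i : ℕ) < s}. Suppose f : (Fin n → ℝ) → ℝ satisfies ContDiffOn ℝ ⊤ f U and iteratedFDerivWithin ℝ j f U x = 0 for every j ∈ {0, 1, …, k} and every x ∈ S_s ∩ U. Then there exist an open neighbourhood V of 0 with V ⊆ U and, for each multi-index I : Fin s → ℕ with |I| = k + 1, a function g_I : (Fin n → ℝ) → ℝ with ContDiffOn ℝ ⊤ g_I V, such that for all x ∈ V: f x = Σ over multi-indices I : Fin s → ℕ with |I| = k + 1 of g_I x * ∏ i : Fin s, (x (Fin.castLE h i)) ^ (I i) (where h : s ≤ n). -/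
/-!
Write `x = x' + y`, where `y = headPart s x` keeps the first `s` coordinates of `x`. Then `x'` lies
on the coordinate subspace, where the derivatives of `f` of order `≤ k` vanish, so Taylor's formula
with integral remainder along `t ↦ x' + t • y` leaves only the remainder
`(1/k!) ∫₀¹ (1 - t)^k D^{k+1} f (x' + t • y) (y, …, y) dt`. Expanding `y = ∑ xᵢ eᵢ` multilinearly
and grouping the tuples of basis vectors by multiplicity produces the monomials `x^I`; their
coefficients are parametric integrals of smooth integrands, hence smooth. All points
`x' + t • y` with `0 ≤ t ≤ 1` lie in the sup-norm ball of radius `‖x‖`, which is why a ball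
inside `U` can serve as `V`.
-/

open Set Finset Nat Filter Topology Metric
open scoped Interval ContDiff

def multiIndex {m s : ℕ} (c : Fin m → Fin s) (i : Fin s) : ℕ := #{j | c j = i}

theorem multiIndex_mem_antidiagonalTuple {m s : ℕ} (c : Fin m → Fin s) :
    multiIndex c ∈ Finset.Nat.antidiagonalTuple s m := by
  rw [Finset.Nat.mem_antidiagonalTuple]
  simpa [multiIndex] using (Finset.card_eq_sum_card_fiberwise (f := c) (s := univ) (t := univ)
    fun j _ => Finset.mem_univ (c j)).symm

theorem prod_comp_eq_prod_pow_multiIndex {M : Type*} [CommMonoid M] {m s : ℕ}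
    (a : Fin s → M) (c : Fin m → Fin s) :
    ∏ j, a (c j) = ∏ i, a i ^ multiIndex c i := by
  rw [← Finset.prod_fiberwise_of_maps_to (g := c) (t := univ) fun j _ => Finset.mem_univ _]
  refine Finset.prod_congr rfl fun i _ => ?_
  rw [Finset.prod_congr rfl fun j hj => congrArg a (Finset.mem_filter.1 hj).2, prod_const,
    multiIndex]

theorem MultilinearMap.map_sum_smul_eq_sum_antidiagonalTuple {R M : Type*} [CommSemiring R]
    [AddCommMonoid M] [Module R M] {m s : ℕ} (A : MultilinearMap R (fun _ : Fin m => M) R)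
    (a : Fin s → R) (v : Fin s → M) :
    A (fun _ => ∑ i, a i • v i) = ∑ I ∈ Finset.Nat.antidiagonalTuple s m,
      (∑ c with multiIndex c = I, A (v ∘ c)) * ∏ i, a i ^ I i := by
  rw [A.map_sum, ← Finset.sum_fiberwise_of_maps_to (g := multiIndex)
    fun c _ => multiIndex_mem_antidiagonalTuple c]
  refine Finset.sum_congr rfl fun I _ => ?_
  rw [Finset.sum_mul]
  refine Finset.sum_congr rfl fun c hc => ?_
  rw [A.map_smul_univ, smul_eq_mul, prod_comp_eq_prod_pow_multiIndex, (Finset.mem_filter.1 hc).2,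
    mul_comm]
  rfl

theorem map_add_eq_integral_iteratedFDeriv_of_iteratedFDeriv_eq_zero {E F : Type*}
    [NormedAddCommGroup E] [NormedSpace ℝ E] [NormedAddCommGroup F] [NormedSpace ℝ F]
    [CompleteSpace F] {f : E → F} {x y : E} {k : ℕ}
    (hf : ∀ t ∈ Icc (0 : ℝ) 1, ContDiffAt ℝ (k + 1) f (x + t • y))
    (hvan : ∀ j ≤ k, iteratedFDeriv ℝ j f x = 0) :
    f (x + y) = (k ! : ℝ)⁻¹ •
      ∫ t in (0 : ℝ)..1, (1 - t) ^ k • iteratedFDeriv ℝ (k + 1) f (x + t • y) (fun _ => y) := by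
  rw [map_add_eq_sum_add_integral_iteratedFDeriv hf, Finset.sum_eq_zero, zero_add]
  intro j hj
  rw [hvan j (Nat.lt_succ_iff.1 (Finset.mem_range.1 hj))]
  simp

section ParametricIntegral

theorem eventually_forall_uIcc_mem_of_isOpen {X : Type*} [TopologicalSpace X] {W : Set (X × ℝ)}
    {a b : ℝ} {x₀ : X} (hW : IsOpen W) (hx₀ : ∀ t ∈ [[a, b]], (x₀, t) ∈ W) :
    ∀ᶠ x in 𝓝 x₀, ∀ t ∈ [[a, b]], (x, t) ∈ W :=
  isCompact_uIcc.eventually_forall_of_forall_eventually fun t ht => hW.mem_nhds (hx₀ t ht)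

theorem ContinuousOn.comp_prodMk_uIcc {X Y : Type*} [TopologicalSpace X] [TopologicalSpace Y]
    {g : X × ℝ → Y} {W : Set (X × ℝ)} {a b : ℝ} (hg : ContinuousOn g W) {x : X}
    (hx : ∀ t ∈ [[a, b]], (x, t) ∈ W) : ContinuousOn (fun t => g (x, t)) [[a, b]] :=
  hg.comp (Continuous.continuousOn (by fun_prop)) hx

universe u

-- One universe for `E` and `G`: the induction below replaces `G` by `E →L[ℝ] G`.
variable {E G : Type u} [NormedAddCommGroup E] [NormedSpace ℝ E] [ProperSpace E]
  [NormedAddCommGroup G] [NormedSpace ℝ G] {F : E × ℝ → G} {W : Set (E × ℝ)} {a b : ℝ} {x₀ : E}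

theorem hasFDerivAt_intervalIntegral_of_contDiffOn (hW : IsOpen W)
    (hF : ContDiffOn ℝ 1 F W) (hx₀ : ∀ t ∈ [[a, b]], (x₀, t) ∈ W) :
    HasFDerivAt (fun x => ∫ t in a..b, F (x, t))
      (∫ t in a..b, (fderiv ℝ F (x₀, t)).comp (.inl ℝ E ℝ)) x₀ := by
  have htube := eventually_forall_uIcc_mem_of_isOpen hW hx₀
  obtain ⟨ε, hε, hball⟩ := Metric.eventually_nhds_iff_ball.1 htube
  have hK : IsCompact (closedBall x₀ (ε / 2) ×ˢ [[a, b]]) :=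
    (isCompact_closedBall _ _).prod isCompact_uIcc
  have hKW : closedBall x₀ (ε / 2) ×ˢ [[a, b]] ⊆ W := fun p hp =>
    hball p.1 (closedBall_subset_ball (by linarith) hp.1) p.2 hp.2
  have hF' : ContinuousOn (fderiv ℝ F) W := hF.continuousOn_fderiv_of_isOpen hW le_rfl
  obtain ⟨C, hC⟩ := hK.exists_bound_of_continuousOn (hF'.mono hKW)
  have hcompL : Continuous fun L : E × ℝ →L[ℝ] G => L.comp (.inl ℝ E ℝ) :=
    ((ContinuousLinearMap.compL ℝ E (E × ℝ) G).flip (.inl ℝ E ℝ)).continuous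
  refine intervalIntegral.hasFDerivAt_integral_of_dominated_of_fderiv_le
    (F' := fun x t => (fderiv ℝ F (x, t)).comp (.inl ℝ E ℝ))
    (bound := fun _ => C * ‖ContinuousLinearMap.inl ℝ E ℝ‖) (ball_mem_nhds x₀ (half_pos hε))
    ?_ ?_ ?_ ?_ intervalIntegrable_const ?_
  · filter_upwards [htube] with x hx
    exact ((hF.continuousOn.comp_prodMk_uIcc hx).mono uIoc_subset_uIcc)
      |>.aestronglyMeasurable measurableSet_uIoc
  · exact (hF.continuousOn.comp_prodMk_uIcc hx₀).intervalIntegrable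
  · exact ((hcompL.comp_continuousOn (hF'.comp_prodMk_uIcc hx₀)).mono uIoc_subset_uIcc)
      |>.aestronglyMeasurable measurableSet_uIoc
  · refine Eventually.of_forall fun t ht x hx => ?_
    exact (ContinuousLinearMap.opNorm_comp_le _ _).trans <| mul_le_mul_of_nonneg_right
      (hC _ ⟨ball_subset_closedBall hx, uIoc_subset_uIcc ht⟩) (norm_nonneg _)
  · refine Eventually.of_forall fun t ht x hx => ?_
    have hxt : (x, t) ∈ W := hball x (ball_subset_ball (by linarith) hx) t (uIoc_subset_uIcc ht)
    exact ((hF.differentiableOn one_ne_zero).differentiableAt (hW.mem_nhds hxt)).hasFDerivAt.comp x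
      (hasFDerivAt_prodMk_left x t)

theorem contDiffAt_intervalIntegral_of_contDiffOn (m : ℕ) (hW : IsOpen W)
    (hF : ContDiffOn ℝ (m + 1) F W) (hx₀ : ∀ t ∈ [[a, b]], (x₀, t) ∈ W) :
    ContDiffAt ℝ m (fun x => ∫ t in a..b, F (x, t)) x₀ := by
  have htube := eventually_forall_uIcc_mem_of_isOpen hW hx₀
  induction m generalizing G with
  | zero =>
    exact contDiffAt_zero.2 ⟨_, htube, fun x hx =>
      (hasFDerivAt_intervalIntegral_of_contDiffOn hW hF hx).continuousAt.continuousWithinAt⟩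
  | succ m ih =>
    have hF' : ContDiffOn ℝ (m + 1) (fun p => (fderiv ℝ F p).comp (.inl ℝ E ℝ)) W :=
      ((ContinuousLinearMap.compL ℝ E (E × ℝ) G).flip (.inl ℝ E ℝ)).contDiff.comp_contDiffOn
        (hF.fderiv_of_isOpen hW (by push_cast; rfl))
    exact contDiffAt_succ_iff_hasFDerivAt.2 ⟨_, ⟨_, htube, fun x hx =>
      hasFDerivAt_intervalIntegral_of_contDiffOn hW (hF.of_le (by norm_cast; omega)) hx⟩,
      ih hF'⟩

theorem contDiffOn_intervalIntegral_of_contDiffOn {V : Set E} (hW : IsOpen W)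
    (hF : ContDiffOn ℝ ∞ F W) (hV : ∀ x ∈ V, ∀ t ∈ [[a, b]], (x, t) ∈ W) :
    ContDiffOn ℝ ∞ (fun x => ∫ t in a..b, F (x, t)) V := fun x hx =>
  (contDiffAt_infty.2 fun m =>
    contDiffAt_intervalIntegral_of_contDiffOn m hW (hF.of_le (by exact_mod_cast le_top))
      (hV x hx)).contDiffWithinAt

end ParametricIntegral

def headPart {R : Type*} [Zero R] (s : ℕ) {n : ℕ} (x : Fin n → R) : Fin n → R :=
  fun j => if (j : ℕ) < s then x j else 0

theorem headPart_eq_sum_single {R : Type*} [Semiring R] {s n : ℕ} (h : s ≤ n) (x : Fin n → R) :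
    headPart s x = ∑ i : Fin s, x (Fin.castLE h i) • Pi.single (Fin.castLE h i) 1 := by
  ext j
  simp only [headPart, Finset.sum_apply, Pi.smul_apply, Pi.single_apply, smul_eq_mul, mul_ite,
    mul_one, mul_zero]
  by_cases hj : (j : ℕ) < s
  · have hcast : ∀ i : Fin s, j = Fin.castLE h i ↔ i = ⟨j, hj⟩ := fun i => by
      simp [Fin.ext_iff, eq_comm]
    simp [hj, hcast]
  · refine (if_neg hj).trans (Finset.sum_eq_zero fun i _ => if_neg ?_).symm
    rintro rfl
    exact hj i.2

def scaleHead (s : ℕ) {n : ℕ} (t : ℝ) (x : Fin n → ℝ) : Fin n → ℝ :=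
  x - headPart s x + t • headPart s x

section Hadamard

variable {n s : ℕ}

theorem contDiff_scaleHead :
    ContDiff ℝ ∞ fun p : (Fin n → ℝ) × ℝ => scaleHead s p.2 p.1 := by
  have hhead : ContDiff ℝ ∞ (headPart s : (Fin n → ℝ) → Fin n → ℝ) := by
    refine contDiff_pi.2 fun j => ?_
    by_cases hj : (j : ℕ) < s <;> simp only [headPart, hj, if_true, if_false]
    · exact contDiff_apply ℝ ℝ j
    · exact contDiff_const
  unfold scaleHead
  fun_prop

theorem norm_scaleHead_le (x : Fin n → ℝ) {t : ℝ} (ht : t ∈ Icc (0 : ℝ) 1) :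
    ‖scaleHead s t x‖ ≤ ‖x‖ := by
  refine pi_norm_le_iff_of_nonneg (norm_nonneg x) |>.2 fun j => ?_
  by_cases hj : (j : ℕ) < s
  · simp only [scaleHead, headPart, hj, Pi.add_apply, Pi.sub_apply, Pi.smul_apply, smul_eq_mul,
      if_true, sub_self, zero_add, norm_mul]
    calc ‖t‖ * ‖x j‖ ≤ 1 * ‖x j‖ := by
          gcongr
          rw [Real.norm_eq_abs, abs_le]
          constructor <;> linarith [ht.1, ht.2]
      _ ≤ ‖x‖ := by rw [one_mul]; exact norm_le_pi_norm x j
  · simpa [scaleHead, headPart, hj] using norm_le_pi_norm x j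

variable {k : ℕ} {f : (Fin n → ℝ) → ℝ} {U : Set (Fin n → ℝ)}

noncomputable def hadamardIntegrand (f : (Fin n → ℝ) → ℝ) (h : s ≤ n) (k : ℕ) (I : Fin s → ℕ)
    (p : (Fin n → ℝ) × ℝ) : ℝ :=
  (k ! : ℝ)⁻¹ * ((1 - p.2) ^ k * ∑ c : Fin (k + 1) → Fin s with multiIndex c = I,
    iteratedFDeriv ℝ (k + 1) f (scaleHead s p.2 p.1) fun j => Pi.single (Fin.castLE h (c j)) 1)

theorem contDiffOn_hadamardIntegrand (h : s ≤ n) (hU : IsOpen U)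
    (hf : ContDiffOn ℝ ∞ f U) (I : Fin s → ℕ) :
    ContDiffOn ℝ ∞ (hadamardIntegrand f h k I) {p | scaleHead s p.2 p.1 ∈ U} := by
  intro p hp
  have hD : ContDiffAt ℝ ∞ (iteratedFDeriv ℝ (k + 1) f) (scaleHead s p.2 p.1) :=
    (hf.contDiffAt (hU.mem_nhds hp)).iteratedFDeriv_right (by exact_mod_cast le_top)
  have hDpath := hD.comp (f := fun p : (Fin n → ℝ) × ℝ => scaleHead s p.2 p.1) p
    contDiff_scaleHead.contDiffAt
  refine (contDiffAt_const.mul (ContDiffAt.mul (by fun_prop)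
    (ContDiffAt.sum fun c _ => ?_))).contDiffWithinAt
  exact (ContinuousMultilinearMap.apply ℝ (fun _ : Fin (k + 1) => Fin n → ℝ) ℝ
    fun j => Pi.single (Fin.castLE h (c j)) 1).contDiff.contDiffAt.comp p hDpath

theorem remainder_eq_sum_hadamardIntegrand_mul (h : s ≤ n) (x : Fin n → ℝ) (t : ℝ) :
    (k ! : ℝ)⁻¹ * ((1 - t) ^ k *
      iteratedFDeriv ℝ (k + 1) f (scaleHead s t x) (fun _ => headPart s x)) =
      ∑ I ∈ Finset.Nat.antidiagonalTuple s (k + 1),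
        hadamardIntegrand f h k I (x, t) * ∏ i, x (Fin.castLE h i) ^ I i := by
  have hexpand := (iteratedFDeriv ℝ (k + 1) f (scaleHead s t x)).toMultilinearMap
    |>.map_sum_smul_eq_sum_antidiagonalTuple (fun i => x (Fin.castLE h i))
      (fun i => Pi.single (Fin.castLE h i) 1)
  rw [ContinuousMultilinearMap.coe_coe] at hexpand
  rw [headPart_eq_sum_single h, hexpand, Finset.mul_sum, Finset.mul_sum]
  refine Finset.sum_congr rfl fun I _ => ?_
  simp only [hadamardIntegrand, Function.comp_def]
  ring

theorem eq_sum_integral_hadamardIntegrand_mul (h : s ≤ n) (hU : IsOpen U)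
    (hf : ContDiffOn ℝ ∞ f U)
    (hvan : ∀ j ≤ k, ∀ x ∈ {x : Fin n → ℝ | ∀ i : Fin n, (i : ℕ) < s → x i = 0} ∩ U,
      iteratedFDerivWithin ℝ j f U x = 0)
    {x : Fin n → ℝ} (hx : ∀ t ∈ [[(0 : ℝ), 1]], scaleHead s t x ∈ U) :
    f x = ∑ I ∈ Finset.Nat.antidiagonalTuple s (k + 1),
      (∫ t in (0 : ℝ)..1, hadamardIntegrand f h k I (x, t)) * ∏ i, x (Fin.castLE h i) ^ I i := by
  have hx₀ : x - headPart s x ∈ U := by simpa [scaleHead] using hx 0 (by simp)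
  have hjet : ∀ j ≤ k, iteratedFDeriv ℝ j f (x - headPart s x) = 0 := fun j hj => by
    rw [← iteratedFDerivWithin_of_isOpen j hU hx₀]
    exact hvan j hj _ ⟨fun i hi => by simp [headPart, hi], hx₀⟩
  have hsmooth : ∀ t ∈ Icc (0 : ℝ) 1, ContDiffAt ℝ (k + 1) f (scaleHead s t x) := fun t ht =>
    (hf.contDiffAt (hU.mem_nhds (hx t (by rwa [Set.uIcc_of_le zero_le_one])))).of_le
      (by exact_mod_cast le_top)
  have hint (I : Fin s → ℕ) :
      IntervalIntegrable (fun t => hadamardIntegrand f h k I (x, t)) MeasureTheory.volume 0 1 :=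
    ((contDiffOn_hadamardIntegrand h hU hf I).continuousOn.comp_prodMk_uIcc hx).intervalIntegrable
  calc f x = f (x - headPart s x + headPart s x) := by rw [sub_add_cancel]
    _ = (k ! : ℝ)⁻¹ * ∫ t in (0 : ℝ)..1,
          (1 - t) ^ k * iteratedFDeriv ℝ (k + 1) f (scaleHead s t x) (fun _ => headPart s x) :=
      map_add_eq_integral_iteratedFDeriv_of_iteratedFDeriv_eq_zero hsmooth hjet
    _ = ∫ t in (0 : ℝ)..1, ∑ I ∈ Finset.Nat.antidiagonalTuple s (k + 1),
          hadamardIntegrand f h k I (x, t) * ∏ i, x (Fin.castLE h i) ^ I i := by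
      rw [← intervalIntegral.integral_const_mul]
      exact intervalIntegral.integral_congr fun t _ => remainder_eq_sum_hadamardIntegrand_mul h x t
    _ = _ := by
      rw [intervalIntegral.integral_finsetSum fun I _ => (hint I).mul_const _]
      simp_rw [intervalIntegral.integral_mul_const]

end Hadamard

/-- Smooth Hadamard-type lemma with vanishing to order `k`: if `f` is `C^∞` on an open
neighbourhood `U` of `0` in `ℝⁿ` and its iterated derivatives of order `≤ k` vanish on the
coordinate subspace `{x | x i = 0 for i < s}` intersected with `U`, then on a smaller
neighbourhood `V` of `0`, `f` is a sum of `C^∞` functions times the monomials of degree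
`k + 1` in the first `s` coordinates. -/
theorem smooth_hadamard_vanishing_order
    (n s k : ℕ) (h : s ≤ n) (U : Set (Fin n → ℝ)) (hU : IsOpen U)
    (h0 : (0 : Fin n → ℝ) ∈ U) (f : (Fin n → ℝ) → ℝ)
    (hf : ContDiffOn ℝ (⊤ : ℕ∞) f U)
    (hvan : ∀ j ≤ k, ∀ x ∈ {x : Fin n → ℝ | ∀ i : Fin n, (i : ℕ) < s → x i = 0} ∩ U,
      iteratedFDerivWithin ℝ j f U x = 0) :
    ∃ V : Set (Fin n → ℝ), IsOpen V ∧ (0 : Fin n → ℝ) ∈ V ∧ V ⊆ U ∧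
      ∃ g : (Fin s → ℕ) → (Fin n → ℝ) → ℝ,
        (∀ I : Fin s → ℕ, ∑ i : Fin s, I i = k + 1 → ContDiffOn ℝ (⊤ : ℕ∞) (g I) V) ∧
        ∀ x ∈ V, f x = ∑ I ∈ Finset.Nat.antidiagonalTuple s (k + 1),
          g I x * ∏ i : Fin s, (x (Fin.castLE h i)) ^ (I i) := by
  obtain ⟨r, hr, hrU⟩ := Metric.isOpen_iff.1 hU 0 h0
  have hscaleU : ∀ x ∈ ball (0 : Fin n → ℝ) r, ∀ t ∈ [[(0 : ℝ), 1]], scaleHead s t x ∈ U := by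
    intro x hx t ht
    rw [Set.uIcc_of_le zero_le_one] at ht
    exact hrU (mem_ball_zero_iff.2 ((norm_scaleHead_le x ht).trans_lt (mem_ball_zero_iff.1 hx)))
  refine ⟨ball 0 r, isOpen_ball, mem_ball_self hr, hrU,
    fun I x => ∫ t in (0 : ℝ)..1, hadamardIntegrand f h k I (x, t), fun I _ => ?_,
    fun x hx => eq_sum_integral_hadamardIntegrand_mul h hU hf hvan (hscaleU x hx)⟩
  exact contDiffOn_intervalIntegral_of_contDiffOn (hU.preimage contDiff_scaleHead.continuous)
    (contDiffOn_hadamardIntegrand h hU hf I) hscaleU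
end

section
/- (Open mapping criterion via seminorms.) Let E and F be real topological vector spaces (topological additive groups with continuous scalar multiplication) that are locally convex, and let L : E →L[ℝ] F be a continuous linear map. Suppose that for every continuous seminorm q on E there exists a continuous seminorm p on F such that q u ≤ p (L u) for all u ∈ E. Then L is an open map onto its image: for every open set s ⊆ E there exists an open set t ⊆ F such that L '' s = t ∩ Set.range L (equivalently, the corestriction of L to Set.range L, with the subspace topology, is an open map). -/
/-!
Around each point `x` of `s` some continuous-seminorm ball `q.ball x r` lies in `s`. Dominating
`q` by `p ∘ L`, the preimage under `L` of `p.ball (L x) r` lies in that ball, so the union `t` of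
these open `p`-balls satisfies `L '' s = t ∩ range L`.
-/

open Set Topology

theorem exists_isOpen_image_eq_inter_range_of_forall_mem {X Y : Type*} [TopologicalSpace Y]
    {f : X → Y} {s : Set X} (h : ∀ x ∈ s, ∃ V : Set Y, IsOpen V ∧ f x ∈ V ∧ f ⁻¹' V ⊆ s) :
    ∃ t : Set Y, IsOpen t ∧ f '' s = t ∩ range f := by
  choose! V hV_open hxV hV_sub using h
  refine ⟨⋃ x ∈ s, V x, isOpen_biUnion hV_open, ?_⟩
  ext y
  constructor
  · rintro ⟨x, hx, rfl⟩
    exact ⟨mem_biUnion hx (hxV x hx), x, rfl⟩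
  · rintro ⟨hy, u, rfl⟩
    obtain ⟨x, hx, hux⟩ := mem_iUnion₂.mp hy
    exact ⟨u, hV_sub x hx hux, rfl⟩

namespace Seminorm

variable {𝕜 E : Type*} [NormedField 𝕜] [AddCommGroup E] [Module 𝕜 E] [TopologicalSpace E]

theorem isOpen_ball_of_continuous [ContinuousSub E] {p : Seminorm 𝕜 E}
    (hp : Continuous p) (x : E) (r : ℝ) : IsOpen (p.ball x r) :=
  isOpen_lt (hp.comp (continuous_sub_right x)) continuous_const

theorem exists_continuous_ball_subset_of_mem_nhds [PolynormableSpace 𝕜 E] {x : E} {U : Set E}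
    (hU : U ∈ 𝓝 x) :
    ∃ q : Seminorm 𝕜 E, Continuous q ∧ ∃ r > 0, q.ball x r ⊆ U := by
  have := (PolynormableSpace.withSeminorms 𝕜 E).topologicalAddGroup
  obtain ⟨I, r, hr, hball⟩ := ((PolynormableSpace.withSeminorms 𝕜 E).mem_nhds_iff x U).mp hU
  exact ⟨I.sup fun q ↦ q.1, continuous_finsetSup fun q _ ↦ q.2, r, hr, hball⟩

end Seminorm

theorem LinearMap.exists_isOpen_preimage_subset_of_seminorm_bounds
    {𝕜 E F : Type*} [NormedField 𝕜]
    [AddCommGroup E] [Module 𝕜 E] [TopologicalSpace E] [PolynormableSpace 𝕜 E]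
    [AddCommGroup F] [Module 𝕜 F] [TopologicalSpace F] [ContinuousSub F]
    (L : E →ₗ[𝕜] F)
    (hL : ∀ q : Seminorm 𝕜 E, Continuous q →
      ∃ p : Seminorm 𝕜 F, Continuous p ∧ ∀ u : E, q u ≤ p (L u))
    {s : Set E} {x : E} (hs : s ∈ 𝓝 x) :
    ∃ V : Set F, IsOpen V ∧ L x ∈ V ∧ L ⁻¹' V ⊆ s := by
  obtain ⟨q, hq, r, hr, hball⟩ := Seminorm.exists_continuous_ball_subset_of_mem_nhds (𝕜 := 𝕜) hs
  obtain ⟨p, hp, hqp⟩ := hL q hq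
  refine ⟨p.ball (L x) r, Seminorm.isOpen_ball_of_continuous hp _ _,
    p.mem_ball_self hr, ?_⟩
  calc L ⁻¹' p.ball (L x) r = (p.comp L).ball x r := (p.ball_comp L x r).symm
    _ ⊆ q.ball x r := Seminorm.ball_antitone hqp
    _ ⊆ s := hball

theorem openMap_onto_image_of_seminorm_bounds_general
    (E F : Type*) [AddCommGroup E] [Module ℝ E] [TopologicalSpace E]
    [IsTopologicalAddGroup E] [ContinuousSMul ℝ E] [LocallyConvexSpace ℝ E]
    [AddCommGroup F] [Module ℝ F] [TopologicalSpace F]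
    [IsTopologicalAddGroup F]
    (L : E →L[ℝ] F)
    (hL : ∀ q : Seminorm ℝ E, Continuous (⇑q) →
      ∃ p : Seminorm ℝ F, Continuous (⇑p) ∧ ∀ u : E, q u ≤ p (L u)) :
    ∀ s : Set E, IsOpen s → ∃ t : Set F, IsOpen t ∧ (⇑L) '' s = t ∩ Set.range (⇑L) := by
  intro s hs
  exact exists_isOpen_image_eq_inter_range_of_forall_mem fun _ hx ↦
    (L : E →ₗ[ℝ] F).exists_isOpen_preimage_subset_of_seminorm_bounds hL (hs.mem_nhds hx)

/-- Open mapping criterion via seminorms: if `L : E →L[ℝ] F` between locally convex real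
topological vector spaces is such that every continuous seminorm `q` on `E` is dominated by
`p ∘ L` for some continuous seminorm `p` on `F`, then `L` is open onto its image: the image
of any open set is the intersection of an open set with the range of `L`. -/
theorem openMap_onto_image_of_seminorm_bounds
    (E F : Type*) [AddCommGroup E] [Module ℝ E] [TopologicalSpace E]
    [IsTopologicalAddGroup E] [ContinuousSMul ℝ E] [LocallyConvexSpace ℝ E]
    [AddCommGroup F] [Module ℝ F] [TopologicalSpace F]
    [IsTopologicalAddGroup F] [ContinuousSMul ℝ F] [LocallyConvexSpace ℝ F]
    (L : E →L[ℝ] F)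
    (hL : ∀ q : Seminorm ℝ E, Continuous (⇑q) →
      ∃ p : Seminorm ℝ F, Continuous (⇑p) ∧ ∀ u : E, q u ≤ p (L u)) :
    ∀ s : Set E, IsOpen s → ∃ t : Set F, IsOpen t ∧ (⇑L) '' s = t ∩ Set.range (⇑L) :=
  openMap_onto_image_of_seminorm_bounds_general E F L hL
end

section
/- (Characterization of real analyticity by factorial derivative bounds.) Let E be a finite-dimensional real normed vector space, let U ⊆ E be open, and let f : E → ℝ satisfy ContDiffOn ℝ ⊤ f U. Then f is real analytic on U (AnalyticOnNhd ℝ f U) if and only if for every compact set K ⊆ U there exist C > 0 and r > 0 such that ‖iteratedFDerivWithin ℝ m f U x‖ ≤ C * m ! / r ^ m for every m ∈ ℕ and every x ∈ K. -/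
/-!
Cauchy estimates and Taylor's formula. If `f` is the sum of a power series `p` with
`‖p n‖ aⁿ ≤ C` near `x`, then for `‖y - x‖ ≤ a / 4` the re-expansion `p.changeOrigin (y - x)` has
`m`-th coefficient at most `2C (2/a)ᵐ`, since each of its terms picks `l` of `m + l` slots of
`p (m + l)`; as `D^m f y` is the symmetrization of that coefficient, this gives factorial bounds on
a neighbourhood of `x`, and compactness makes them uniform on `K`. Conversely, Taylor's formula
with integral remainder along `t ↦ x + t • y` bounds the error after `n + 1` terms by
`C (n + 1) (‖y‖ / r)ⁿ⁺¹`, which tends to zero when `‖y‖ < r`.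
-/

open Set Metric Filter
open scoped Topology ENNReal ContDiff Nat

section General

variable {𝕜 E F : Type*} [NontriviallyNormedField 𝕜] [NormedAddCommGroup E] [NormedSpace 𝕜 E]
  [NormedAddCommGroup F] [NormedSpace 𝕜 F]

variable (𝕜) in
def HasCauchyBoundsOn (f : E → F) (s : Set E) : Prop :=
  ∃ C > (0 : ℝ), ∃ r > (0 : ℝ), ∀ (m : ℕ), ∀ x ∈ s,
    ‖iteratedFDeriv 𝕜 m f x‖ ≤ C * m ! / r ^ m

namespace HasCauchyBoundsOn

variable {f : E → F} {s t : Set E}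

theorem empty : HasCauchyBoundsOn 𝕜 f ∅ :=
  ⟨1, one_pos, 1, one_pos, by simp⟩

theorem mono (h : HasCauchyBoundsOn 𝕜 f t) (hst : s ⊆ t) : HasCauchyBoundsOn 𝕜 f s :=
  let ⟨C, hC, r, hr, hb⟩ := h
  ⟨C, hC, r, hr, fun m x hx => hb m x (hst hx)⟩

theorem union (hs : HasCauchyBoundsOn 𝕜 f s) (ht : HasCauchyBoundsOn 𝕜 f t) :
    HasCauchyBoundsOn 𝕜 f (s ∪ t) := by
  obtain ⟨C₁, hC₁, r₁, hr₁, hb₁⟩ := hs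
  obtain ⟨C₂, hC₂, r₂, hr₂, hb₂⟩ := ht
  refine ⟨max C₁ C₂, lt_max_of_lt_left hC₁, min r₁ r₂, lt_min hr₁ hr₂, ?_⟩
  rintro m x (hx | hx)
  · exact (hb₁ m x hx).trans (by gcongr <;> simp)
  · exact (hb₂ m x hx).trans (by gcongr <;> simp)

end HasCauchyBoundsOn

theorem IsCompact.hasCauchyBoundsOn {f : E → F} {K : Set E} (hK : IsCompact K)
    (h : ∀ x ∈ K, ∃ t ∈ 𝓝 x, HasCauchyBoundsOn 𝕜 f t) : HasCauchyBoundsOn 𝕜 f K :=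
  hK.induction_on .empty (fun _ _ hst ht => ht.mono hst) (fun _ _ hs ht => hs.union ht)
    fun x hx => (h x hx).imp fun _ ht => ⟨mem_nhdsWithin_of_mem_nhds ht.1, ht.2⟩

theorem hasCauchyBoundsOn_iff_iteratedFDerivWithin {f : E → F} {U s : Set E} (hU : IsOpen U)
    (hs : s ⊆ U) :
    HasCauchyBoundsOn 𝕜 f s ↔ ∃ C > (0 : ℝ), ∃ r > (0 : ℝ), ∀ (m : ℕ), ∀ x ∈ s,
      ‖iteratedFDerivWithin 𝕜 m f U x‖ ≤ C * m ! / r ^ m := by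
  unfold HasCauchyBoundsOn
  refine exists_congr fun C => and_congr_right fun _ => exists_congr fun r =>
    and_congr_right fun _ => forall_congr' fun m => forall₂_congr fun x hx => ?_
  rw [iteratedFDerivWithin_of_isOpen m hU (hs hx)]

theorem HasFPowerSeriesOnBall.norm_iteratedFDeriv_le [CompleteSpace F] {f : E → F}
    {p : FormalMultilinearSeries 𝕜 E F} {x : E} {r : ℝ≥0∞} (hf : HasFPowerSeriesOnBall f p x r)
    (n : ℕ) : ‖iteratedFDeriv 𝕜 n f x‖ ≤ n ! * ‖p n‖ := by
  refine ContinuousMultilinearMap.opNorm_le_bound (by positivity) fun v => ?_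
  rw [hf.iteratedFDeriv_eq_sum_of_completeSpace, mul_assoc]
  calc ‖∑ σ : Equiv.Perm (Fin n), p n (fun i => v (σ i))‖
      ≤ ∑ _σ : Equiv.Perm (Fin n), ‖p n‖ * ∏ i, ‖v i‖ := by
        refine norm_sum_le_of_le _ fun σ _ => ((p n).le_opNorm _).trans_eq ?_
        rw [Equiv.prod_comp σ fun i => ‖v i‖]
    _ = n ! * (‖p n‖ * ∏ i, ‖v i‖) := by simp [Fintype.card_perm]

namespace FormalMultilinearSeries

theorem norm_changeOriginSeries_le (p : FormalMultilinearSeries 𝕜 E F) (k l : ℕ) :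
    ‖p.changeOriginSeries k l‖ ≤ (2 : ℝ) ^ (k + l) * ‖p (k + l)‖ := by
  rw [changeOriginSeries]
  refine (norm_sum_le Finset.univ fun s : {s : Finset (Fin (k + l)) // s.card = l} =>
    p.changeOriginSeriesTerm k l s.1 s.2).trans ?_
  rw [Finset.sum_congr rfl fun s _ => p.norm_changeOriginSeriesTerm k l s.1 s.2, Finset.sum_const,
    Finset.card_univ, nsmul_eq_mul]
  gcongr
  calc (Fintype.card {s : Finset (Fin (k + l)) // s.card = l} : ℝ)
      ≤ Fintype.card (Finset (Fin (k + l))) := mod_cast Fintype.card_subtype_le _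
    _ = 2 ^ (k + l) := by simp

theorem norm_changeOrigin_le (p : FormalMultilinearSeries 𝕜 E F) {a C : ℝ} (ha : 0 < a)
    (hp : ∀ n, ‖p n‖ * a ^ n ≤ C) {z : E} (hz : ‖z‖ ≤ a / 4) (k : ℕ) :
    ‖p.changeOrigin z k‖ ≤ 2 * C * (2 / a) ^ k := by
  have hterm (l : ℕ) : ‖p.changeOriginSeries k l (fun _ => z)‖ ≤ C * (2 / a) ^ k * (1 / 2) ^ l :=
    calc ‖p.changeOriginSeries k l (fun _ => z)‖
        ≤ ‖p.changeOriginSeries k l‖ * ‖z‖ ^ l := by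
          simpa using (p.changeOriginSeries k l).le_opNorm fun _ => z
      _ ≤ 2 ^ (k + l) * ‖p (k + l)‖ * (a / 4) ^ l := by
          gcongr
          exact p.norm_changeOriginSeries_le k l
      _ = ‖p (k + l)‖ * a ^ (k + l) * (2 / a) ^ k * (1 / 2) ^ l := by
          have h4 : (4 : ℝ) ^ l = 2 ^ l * 2 ^ l := by rw [← mul_pow]; norm_num
          rw [div_pow, div_pow, div_pow, one_pow, h4, pow_add, pow_add]
          field_simp
      _ ≤ C * (2 / a) ^ k * (1 / 2) ^ l := by gcongr; exact hp (k + l)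
  exact (tsum_of_norm_bounded (hasSum_geometric_two.mul_left _) hterm).trans_eq (by ring)

end FormalMultilinearSeries

theorem AnalyticAt.exists_mem_nhds_hasCauchyBoundsOn [CompleteSpace F] {f : E → F} {x : E}
    (hf : AnalyticAt 𝕜 f x) : ∃ t ∈ 𝓝 x, HasCauchyBoundsOn 𝕜 f t := by
  obtain ⟨p, R, hp⟩ := hf
  obtain ⟨a, ha, haR⟩ := ENNReal.lt_iff_exists_nnreal_btwn.1 hp.r_pos
  obtain ⟨C, hC, hpC⟩ := p.norm_mul_pow_le_of_lt_radius (haR.trans_le hp.r_le)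
  have ha : (0 : ℝ) < a := mod_cast ha
  refine ⟨ball x (a / 4), ball_mem_nhds x (by positivity), 2 * C, by positivity, a / 2,
    by positivity, fun m y hy => ?_⟩
  have hz : ‖y - x‖ ≤ a / 4 := (dist_eq_norm y x ▸ mem_ball.1 hy).le
  have hzR : (‖y - x‖₊ : ℝ≥0∞) < R :=
    lt_of_le_of_lt (mod_cast (hz.trans (by linarith) : ‖y - x‖ ≤ a)) haR
  have hq := hp.changeOrigin hzR
  rw [add_sub_cancel] at hq
  calc ‖iteratedFDeriv 𝕜 m f y‖ ≤ m ! * ‖p.changeOrigin (y - x) m‖ :=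
        hq.norm_iteratedFDeriv_le m
    _ ≤ m ! * (2 * C * (2 / a) ^ m) := by gcongr; exact p.norm_changeOrigin_le ha hpC hz m
    _ = 2 * C * m ! / (a / 2) ^ m := by rw [div_pow, div_pow]; field_simp

end General

section Real

variable {E F : Type*} [NormedAddCommGroup E] [NormedSpace ℝ E] [NormedAddCommGroup F]
  [NormedSpace ℝ F] [CompleteSpace F] {f : E → F} {x y : E}

theorem norm_map_add_sub_sum_iteratedFDeriv_le {n : ℕ} {M : ℝ}
    (hf : ∀ t ∈ Icc (0 : ℝ) 1, ContDiffAt ℝ (n + 1) f (x + t • y))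
    (hM : ∀ t ∈ Icc (0 : ℝ) 1, ‖iteratedFDeriv ℝ (n + 1) f (x + t • y)‖ ≤ M) :
    ‖f (x + y) - ∑ k ∈ Finset.range (n + 1), (k ! : ℝ)⁻¹ • iteratedFDeriv ℝ k f x (fun _ ↦ y)‖ ≤
      M * ‖y‖ ^ (n + 1) / n ! := by
  rw [map_add_eq_sum_add_integral_iteratedFDeriv hf, add_sub_cancel_left, norm_smul,
    norm_inv, RCLike.norm_natCast, inv_mul_eq_div]
  have hint : ∀ t ∈ uIoc (0 : ℝ) 1,
      ‖(1 - t) ^ n • iteratedFDeriv ℝ (n + 1) f (x + t • y) (fun _ ↦ y)‖ ≤ M * ‖y‖ ^ (n + 1) := by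
    intro t ht
    rw [uIoc_of_le zero_le_one] at ht
    have ht' : t ∈ Icc (0 : ℝ) 1 := Ioc_subset_Icc_self ht
    rw [norm_smul, norm_pow, Real.norm_of_nonneg (sub_nonneg.2 ht.2)]
    calc (1 - t) ^ n * ‖iteratedFDeriv ℝ (n + 1) f (x + t • y) (fun _ ↦ y)‖
        ≤ 1 * (M * ‖y‖ ^ (n + 1)) := by
          gcongr
          · exact pow_le_one₀ (sub_nonneg.2 ht.2) (by linarith [ht.1])
          · refine ((iteratedFDeriv ℝ (n + 1) f (x + t • y)).le_opNorm _).trans ?_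
            simp only [Finset.prod_const, Finset.card_univ, Fintype.card_fin]
            gcongr
            exact hM t ht'
      _ = M * ‖y‖ ^ (n + 1) := one_mul _
  gcongr
  simpa using intervalIntegral.norm_integral_le_of_norm_le_const hint

theorem tendsto_sum_range_iteratedFDeriv_of_norm_le {δ C r : ℝ}
    (hf : ContDiffOn ℝ ∞ f (ball x δ)) (hr : 0 < r)
    (hb : ∀ (m : ℕ), ∀ z ∈ ball x δ, ‖iteratedFDeriv ℝ m f z‖ ≤ C * m ! / r ^ m)
    (hyr : ‖y‖ < r) (hyδ : ‖y‖ < δ) :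
    Tendsto (fun n => ∑ k ∈ Finset.range n, (k ! : ℝ)⁻¹ • iteratedFDeriv ℝ k f x (fun _ => y))
      atTop (𝓝 (f (x + y))) := by
  have hseg (t : ℝ) (ht : t ∈ Icc (0 : ℝ) 1) : x + t • y ∈ ball x δ := by
    rw [mem_ball, dist_self_add_left, norm_smul, Real.norm_of_nonneg ht.1]
    calc t * ‖y‖ ≤ 1 * ‖y‖ := by gcongr; exact ht.2
      _ < δ := by rwa [one_mul]
  have hsmooth (n : ℕ) (t : ℝ) (ht : t ∈ Icc (0 : ℝ) 1) : ContDiffAt ℝ (n + 1) f (x + t • y) :=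
    (hf.contDiffAt (isOpen_ball.mem_nhds (hseg t ht))).of_le (by exact_mod_cast le_top)
  set θ := ‖y‖ / r
  have hθ : Tendsto (fun n : ℕ => C * ((n + 1 : ℕ) * θ ^ (n + 1))) atTop (𝓝 0) := by
    simpa using ((tendsto_add_atTop_iff_nat 1).2 (tendsto_self_mul_const_pow_of_lt_one
      (by positivity) ((div_lt_one hr).2 hyr))).const_mul C
  rw [← tendsto_add_atTop_iff_nat 1, tendsto_iff_norm_sub_tendsto_zero]
  refine squeeze_zero (fun _ => norm_nonneg _) (fun n => ?_) hθ
  rw [norm_sub_rev]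
  calc _ ≤ C * (n + 1) ! / r ^ (n + 1) * ‖y‖ ^ (n + 1) / n ! :=
        norm_map_add_sub_sum_iteratedFDeriv_le (hsmooth n) fun t ht => hb _ _ (hseg t ht)
    _ = C * ((n + 1 : ℕ) * θ ^ (n + 1)) := by
        rw [Nat.factorial_succ, div_pow]; push_cast; field_simp

theorem HasCauchyBoundsOn.analyticAt {δ : ℝ} (hδ : 0 < δ) (hf : ContDiffOn ℝ ∞ f (ball x δ))
    (hb : HasCauchyBoundsOn ℝ f (ball x δ)) : AnalyticAt ℝ f x := by
  obtain ⟨C, -, r, hr, hb⟩ := hb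
  let p : FormalMultilinearSeries ℝ E F := fun n => (n ! : ℝ)⁻¹ • iteratedFDeriv ℝ n f x
  have hp (n : ℕ) : ‖p n‖ * r ^ n ≤ C := by
    have hpn : ‖p n‖ = (n ! : ℝ)⁻¹ * ‖iteratedFDeriv ℝ n f x‖ := by
      rw [norm_smul, norm_inv, RCLike.norm_natCast]
    rw [hpn, inv_mul_eq_div, div_mul_eq_mul_div, div_le_iff₀ (by positivity),
      ← le_div_iff₀ (by positivity)]
    exact hb n x (mem_ball_self hδ)
  have hrad : ENNReal.ofReal (min r δ) ≤ p.radius :=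
    (ENNReal.ofReal_le_ofReal (min_le_left _ _)).trans
      (p.le_radius_of_bound C fun n => by simpa [Real.coe_toNNReal _ hr.le] using hp n)
  refine ⟨p, _, hrad, ENNReal.ofReal_pos.2 (lt_min hr hδ), fun {y} hy => ?_⟩
  have hy' : ‖y‖ < min r δ := by
    rwa [mem_eball_zero_iff, ← ofReal_norm, ENNReal.ofReal_lt_ofReal_iff (lt_min hr hδ)] at hy
  have hsum := p.hasSum (mem_eball_zero_iff.2 ((mem_eball_zero_iff.1 hy).trans_le hrad))
  have hlim := tendsto_sum_range_iteratedFDeriv_of_norm_le hf hr hb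
    (hy'.trans_le (min_le_left _ _)) (hy'.trans_le (min_le_right _ _))
  rwa [← tendsto_nhds_unique hlim hsum.tendsto_sum_nat] at hsum

end Real

/-- Characterization of real analyticity by factorial derivative bounds: a `C^∞` function
`f` on an open set `U` in a finite-dimensional real normed space is real analytic on `U` if
and only if, on every compact `K ⊆ U`, there are `C, r > 0` with
`‖iteratedFDerivWithin ℝ m f U x‖ ≤ C m! / rᵐ` for all `m` and all `x ∈ K`. -/
theorem analyticOnNhd_iff_factorial_bounds
    (E : Type*) [NormedAddCommGroup E] [NormedSpace ℝ E] [FiniteDimensional ℝ E]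
    (U : Set E) (hU : IsOpen U) (f : E → ℝ) (hf : ContDiffOn ℝ (⊤ : ℕ∞) f U) :
    AnalyticOnNhd ℝ f U ↔
      ∀ K : Set E, K ⊆ U → IsCompact K →
        ∃ C > (0 : ℝ), ∃ r > (0 : ℝ), ∀ (m : ℕ), ∀ x ∈ K,
          ‖iteratedFDerivWithin ℝ m f U x‖ ≤ C * (m.factorial : ℝ) / r ^ m := by
  constructor
  · intro hA K hKU hK
    rw [← hasCauchyBoundsOn_iff_iteratedFDerivWithin hU hKU]
    exact hK.hasCauchyBoundsOn fun x hx => (hA x (hKU hx)).exists_mem_nhds_hasCauchyBoundsOn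
  · intro hB x hx
    obtain ⟨δ, hδ, hδU⟩ := nhds_basis_closedBall.mem_iff.1 (hU.mem_nhds hx)
    have hb := (hasCauchyBoundsOn_iff_iteratedFDerivWithin hU hδU).2
      (hB _ hδU (isCompact_closedBall x δ))
    exact (hb.mono ball_subset_closedBall).analyticAt hδ
      (hf.mono (ball_subset_closedBall.trans hδU))
end
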